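/- Let q be real with 0 < q < 1 and define A_n[s_1,…,s_m] = ∑_{n ≥ k_1 ≥ ⋯ ≥ k_m ≥ 1} (-1)^{k_1+1} q^{k_1(k_1+1)/2} C_q(n,k_1) ∏_{j=1}^m q^{(s_j-1)k_j}[k_j]_q^{-s_j}. Then for all positive integers n, m (m ≥ 2) and positive integers s_2,…,s_m: A_n[0, s_2, s_3, …, s_m] = [n]_q^{-1} A_n[s_2 - 1, s_3, …, s_m]. -/

import Mathlib

/-! Putting `s₁ = 0` and exchanging the two outer sums reduces the claim to the tail identity
`∑_{k=j}^{n} (-1)^{k+1} q^{k(k-1)/2} C_q(n,k) = (-1)^{j+1} q^{j(j-1)/2} C_q(n-1,j-1)` for `1 ≤ j ≤ n`,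
a `q`-analogue of `∑_{k ≥ j} (-1)^k C(n,k) = (-1)^j C(n-1,j-1)`. It telescopes by the `q`-Pascal rule
`C_q(n,k) = q^k C_q(n-1,k) + C_q(n-1,k-1)`. The absorption identity
`[j]_q C_q(n,j) = [n]_q C_q(n-1,j-1)` then rewrites the tail as `C_q(n,j) [j]_q / [n]_q`, and the extra
factor `q^{-j} [j]_q` is exactly what lowers the exponent `s₂` by one. -/

/-- Gaussian binomial coefficient, vanishing unless `k ≤ n`. -/
noncomputable def qbinom (q : ℝ) (n k : ℕ) : ℝ :=
  if k ≤ n then ∏ j ∈ Finset.Icc 1 k, (1 - q ^ (n - k + j)) / (1 - q ^ j) else 0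

/-- The `q`-analog of a natural number: `[k]_q = (1-q^k)/(1-q)`. -/
noncomputable def qnum (q : ℝ) (k : ℕ) : ℝ := (1 - q ^ k) / (1 - q)

/-- `Zn q n [s₁,…,s_m] = ∑_{n ≥ k₁ ≥ ⋯ ≥ k_m ≥ 1} ∏_j q^{k_j} [k_j]_q^{-s_j}`. -/
noncomputable def Zn (q : ℝ) : ℕ → List ℕ → ℝ
  | _, [] => 1
  | n, s :: t => ∑ k ∈ Finset.Icc 1 n, q ^ k / (qnum q k) ^ s * Zn q k t

/-- `Wn q n [s₁,…,s_m] = ∑_{n ≥ k₁ ≥ ⋯ ≥ k_m ≥ 1} ∏_j q^{(s_j-1) k_j} [k_j]_q^{-s_j}`. -/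
noncomputable def Wn (q : ℝ) : ℕ → List ℕ → ℝ
  | _, [] => 1
  | n, s :: t => ∑ k ∈ Finset.Icc 1 n,
      q ^ (((s : ℤ) - 1) * (k : ℤ)) / (qnum q k) ^ s * Wn q k t

/-- `An q n [s₁,…,s_m] = ∑_{n ≥ k₁ ≥ ⋯ ≥ k_m ≥ 1} (-1)^{k₁+1} q^{k₁(k₁+1)/2} C_q(n,k₁)
    ∏_j q^{(s_j-1) k_j} [k_j]_q^{-s_j}`. -/
noncomputable def An (q : ℝ) (n : ℕ) : List ℕ → ℝ
  | [] => 1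
  | s :: t => ∑ k ∈ Finset.Icc 1 n,
      (-1 : ℝ) ^ (k + 1) * q ^ (k * (k + 1) / 2) * qbinom q n k *
        (q ^ (((s : ℤ) - 1) * (k : ℤ)) / (qnum q k) ^ s) * Wn q k t

open Finset

theorem Finset.prod_Icc_one_eq_prod_range {M : Type*} [CommMonoid M] (f : ℕ → M) (k : ℕ) :
    ∏ i ∈ Icc 1 k, f i = ∏ i ∈ range k, f (i + 1) := by
  rw [range_eq_Ico, prod_Ico_add', zero_add, Ico_add_one_right_eq_Icc]

theorem Nat.add_one_mul_add_one_add_one_div_two (k : ℕ) :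
    (k + 1) * (k + 1 + 1) / 2 = k * (k + 1) / 2 + (k + 1) := by
  rw [show (k + 1) * (k + 1 + 1) = k * (k + 1) + 2 * (k + 1) by ring,
    Nat.add_mul_div_left _ _ two_pos]

section QBinom

variable {q : ℝ}

theorem qbinom_eq_prod_div (m k : ℕ) :
    qbinom q m k = (∏ i ∈ range k, (1 - q ^ (m - i))) / ∏ i ∈ range k, (1 - q ^ (i + 1)) := by
  rw [qbinom]
  split_ifs with hk
  · rw [prod_div_distrib, prod_Icc_one_eq_prod_range, prod_Icc_one_eq_prod_range,
      ← prod_range_reflect (fun i => 1 - q ^ (m - i))]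
    congr 1
    refine prod_congr rfl fun i hi => ?_
    rw [mem_range] at hi
    congr 2
    omega
  · rw [prod_eq_zero (mem_range.2 (not_le.1 hk)) (by simp), zero_div]

theorem qbinom_succ_succ_mul (m k : ℕ) (hq : q ^ (k + 1) ≠ 1) :
    qbinom q (m + 1) (k + 1) * (1 - q ^ (k + 1)) = qbinom q m k * (1 - q ^ (m + 1)) := by
  have h : 1 - q ^ (k + 1) ≠ 0 := sub_ne_zero.2 hq.symm
  rw [qbinom_eq_prod_div, qbinom_eq_prod_div, prod_range_succ', prod_range_succ]
  simp only [Nat.add_sub_add_right, Nat.sub_zero]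
  field_simp

theorem qbinom_succ_mul (m k : ℕ) (hq : q ^ (k + 1) ≠ 1) :
    qbinom q m (k + 1) * (1 - q ^ (k + 1)) = qbinom q m k * (1 - q ^ (m - k)) := by
  have h : 1 - q ^ (k + 1) ≠ 0 := sub_ne_zero.2 hq.symm
  rw [qbinom_eq_prod_div, qbinom_eq_prod_div, prod_range_succ, prod_range_succ]
  field_simp

theorem qbinom_succ_succ (m k : ℕ) (hq : q ^ (k + 1) ≠ 1) :
    qbinom q (m + 1) (k + 1) = q ^ (k + 1) * qbinom q m (k + 1) + qbinom q m k := by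
  refine mul_right_cancel₀ (sub_ne_zero.2 hq.symm) ?_
  rw [qbinom_succ_succ_mul m k hq, add_mul, mul_assoc, qbinom_succ_mul m k hq]
  rcases le_or_gt k m with hkm | hkm
  · rw [show m + 1 = k + 1 + (m - k) by omega, pow_add]
    ring
  · rw [qbinom, if_neg hkm.not_ge]
    ring

theorem qnum_mul_qbinom_succ_succ (m k : ℕ) (hq : q ^ (k + 1) ≠ 1) :
    qnum q (k + 1) * qbinom q (m + 1) (k + 1) = qnum q (m + 1) * qbinom q m k := by
  rw [qnum, qnum, div_mul_eq_mul_div, mul_comm, qbinom_succ_succ_mul m k hq, mul_comm,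
    mul_div_right_comm]

theorem qnum_ne_zero (hq : ∀ k : ℕ, q ^ (k + 1) ≠ 1) {k : ℕ} (hk : k ≠ 0) : qnum q k ≠ 0 := by
  obtain ⟨k, rfl⟩ := Nat.exists_eq_succ_of_ne_zero hk
  exact div_ne_zero (sub_ne_zero.2 (hq k).symm) (sub_ne_zero.2 (by simpa using (hq 0).symm))

theorem sum_Icc_neg_one_pow_mul_qbinom_succ (hq : ∀ k : ℕ, q ^ (k + 1) ≠ 1) {i m : ℕ}
    (him : i ≤ m) :
    ∑ k ∈ Icc i m, (-1 : ℝ) ^ k * q ^ (k * (k + 1) / 2) * qbinom q (m + 1) (k + 1) =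
      (-1) ^ i * q ^ (i * (i + 1) / 2) * qbinom q m i := by
  set f : ℕ → ℝ := fun k => (-1) ^ (k + 1) * q ^ (k * (k + 1) / 2) * qbinom q m k
  have hstep : ∀ k, (-1 : ℝ) ^ k * q ^ (k * (k + 1) / 2) * qbinom q (m + 1) (k + 1) =
      f (k + 1) - f k := by
    intro k
    simp only [f, qbinom_succ_succ m k (hq k), Nat.add_one_mul_add_one_add_one_div_two, pow_add]
    ring
  rw [sum_congr rfl fun k _ => hstep k, sum_Icc_sub him]
  simp only [f, qbinom, if_neg (Nat.lt_succ_self m).not_ge]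
  ring

theorem sum_Icc_neg_one_pow_mul_qbinom_div_pow (hq0 : q ≠ 0) (hq : ∀ k : ℕ, q ^ (k + 1) ≠ 1)
    {j n : ℕ} (hj : 1 ≤ j) (hjn : j ≤ n) :
    ∑ k ∈ Icc j n, (-1 : ℝ) ^ (k + 1) * q ^ (k * (k + 1) / 2) * qbinom q n k / q ^ k =
      (-1) ^ (j + 1) * q ^ (j * (j + 1) / 2) * qbinom q n j / q ^ j * qnum q j / qnum q n := by
  obtain ⟨i, rfl⟩ : ∃ i, j = i + 1 := ⟨j - 1, by omega⟩
  obtain ⟨m, rfl⟩ : ∃ m, n = m + 1 := ⟨n - 1, by omega⟩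
  have hterm : ∀ k ∈ Icc i m, (-1 : ℝ) ^ (k + 1 + 1) * q ^ ((k + 1) * (k + 1 + 1) / 2) *
      qbinom q (m + 1) (k + 1) / q ^ (k + 1) =
        (-1) ^ k * q ^ (k * (k + 1) / 2) * qbinom q (m + 1) (k + 1) := by
    intro k _
    rw [Nat.add_one_mul_add_one_add_one_div_two, pow_add]
    field_simp
    ring
  rw [← map_add_right_Icc i m 1, sum_map]
  simp only [addRightEmbedding_apply]
  rw [sum_congr rfl hterm, sum_Icc_neg_one_pow_mul_qbinom_succ hq (by omega),
    Nat.add_one_mul_add_one_add_one_div_two, pow_add]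
  have hqnum : qnum q (m + 1) ≠ 0 := qnum_ne_zero hq m.succ_ne_zero
  field_simp
  linear_combination (-(-1) ^ i * q ^ (i * (i + 1) / 2) * q ^ (i + 1)) *
    qnum_mul_qbinom_succ_succ m i (hq i)

end QBinom

theorem An_zero_recurrence_general (q : ℝ) (hq0 : 0 < q) (hq1 : q < 1) (n : ℕ)
    (s₂ : ℕ) (hs₂ : 0 < s₂) (t : List ℕ) :
    An q n (0 :: s₂ :: t) = (qnum q n)⁻¹ * An q n ((s₂ - 1) :: t) := by
  have hq : ∀ k : ℕ, q ^ (k + 1) ≠ 1 := fun k => (pow_lt_one₀ hq0.le hq1 k.succ_ne_zero).ne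
  set v : ℕ → ℝ := fun j => q ^ (((s₂ : ℤ) - 1) * j) / qnum q j ^ s₂ * Wn q j t
  have hswap : An q n (0 :: s₂ :: t) = ∑ j ∈ Icc 1 n,
      (∑ k ∈ Icc j n, (-1 : ℝ) ^ (k + 1) * q ^ (k * (k + 1) / 2) * qbinom q n k / q ^ k) * v j := by
    simp only [An, Wn, Nat.cast_zero, zero_sub, neg_one_mul, zpow_neg, zpow_natCast, pow_zero,
      div_one, mul_sum, sum_mul]
    refine sum_comm' fun k j => ?_
    simp only [mem_Icc]
    omega
  rw [hswap, An, mul_sum]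
  refine sum_congr rfl fun j hj => ?_
  obtain ⟨hj1, hjn⟩ := mem_Icc.1 hj
  rw [sum_Icc_neg_one_pow_mul_qbinom_div_pow hq0.ne' hq hj1 hjn]
  obtain ⟨s, rfl⟩ : ∃ s, s₂ = s + 1 := ⟨s₂ - 1, by omega⟩
  have hexp : (((s + 1 : ℕ) : ℤ) - 1) * j = (((s + 1 - 1 : ℕ) : ℤ) - 1) * j + j := by
    push_cast
    ring
  simp only [v, hexp, zpow_add₀ hq0.ne', zpow_natCast, Nat.add_sub_cancel, pow_succ]
  have hqj : qnum q j ≠ 0 := qnum_ne_zero hq (by omega)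
  field_simp

/-- Proposition 2: recurrence for `A_n` with leading exponent `0`. -/
theorem An_zero_recurrence (q : ℝ) (hq0 : 0 < q) (hq1 : q < 1) (n : ℕ) (hn : 0 < n)
    (s₂ : ℕ) (hs₂ : 0 < s₂) (t : List ℕ) (ht : ∀ s ∈ t, 0 < s) :
    An q n (0 :: s₂ :: t) = (qnum q n)⁻¹ * An q n ((s₂ - 1) :: t) :=
  An_zero_recurrence_general q hq0 hq1 n s₂ hs₂ t
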